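/- arXiv:0902.3643 — 2 statements merged into one kernel-verified Lean document; each statement's English description precedes it below -/
import Mathlib

section
/- Fix ε > 0 and set ε₂ = ε, ε₁ = -1-2ε. Then for all v = (v₁,v₂) ∈ ℝ², |P̂(v₁ + iε₁, v₂ + iε₂)| ≤ B(ε, 2+ε) · min( Q(v₂²)^{-1/2}, Q((v₁+v₂)²)^{-1/2} ), where Q(z) = (z+ε²)(z+(1+ε)²) and B(a,b) = Γ(a)Γ(b)/Γ(a+b) is the beta function. -/
/-
Put `a = ε + i(v₁ + v₂)` and `b = ε - i v₂`, so that `P̂ = Γ(a) Γ(b) / Γ(a + b + 2)`.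
Two steps of the recurrence for `Γ(a)` turn this into `B(a + 2, b) / (a (a + 1))`, and
`|B(u, v)| ≤ B(Re u, Re v)` since the modulus of the Euler integrand `t^(u-1) (1-t)^(v-1)` only
depends on the real parts. As `|a| |a + 1| = √Q((Im a)²)`, this is the bound with `Q((v₁+v₂)²)`;
exchanging the roles of `a` and `b` gives the one with `Q(v₂²)`.
-/

open Complex Set MeasureTheory ProbabilityTheory

namespace Complex

noncomputable def betaIntegrand (u v : ℂ) (t : ℝ) : ℂ :=
  (t : ℂ) ^ (u - 1) * (1 - (t : ℂ)) ^ (v - 1)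

lemma betaIntegral_eq_integral_betaIntegrand (u v : ℂ) :
    betaIntegral u v = ∫ t in (0 : ℝ)..1, betaIntegrand u v t := rfl

lemma norm_ofReal_cpow_le {x : ℝ} (hx : 0 ≤ x) (w : ℂ) : ‖(x : ℂ) ^ w‖ ≤ x ^ w.re := by
  simpa [arg_ofReal_of_nonneg hx, abs_of_nonneg hx] using norm_cpow_le (x : ℂ) w

lemma norm_betaIntegrand_le (u v : ℂ) {t : ℝ} (ht : t ∈ Icc (0 : ℝ) 1) :
    ‖betaIntegrand u v t‖ ≤ t ^ (u.re - 1) * (1 - t) ^ (v.re - 1) := by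
  have h1t : 0 ≤ 1 - t := sub_nonneg.2 ht.2
  rw [betaIntegrand, norm_mul, show (1 : ℂ) - t = ((1 - t : ℝ) : ℂ) by push_cast; ring]
  simpa using mul_le_mul (norm_ofReal_cpow_le ht.1 (u - 1)) (norm_ofReal_cpow_le h1t (v - 1))
    (norm_nonneg _) (Real.rpow_nonneg ht.1 _)

lemma betaIntegrand_ofReal (x y : ℝ) {t : ℝ} (ht : t ∈ Icc (0 : ℝ) 1) :
    betaIntegrand x y t = ((t ^ (x - 1) * (1 - t) ^ (y - 1) : ℝ) : ℂ) := by
  push_cast [ofReal_cpow ht.1, ofReal_cpow (sub_nonneg.2 ht.2)]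
  rfl

lemma integral_rpow_mul_one_sub_rpow {x y : ℝ} (hx : 0 < x) (hy : 0 < y) :
    ∫ t in (0 : ℝ)..1, t ^ (x - 1) * (1 - t) ^ (y - 1) = beta x y := by
  rw [beta_eq_betaIntegralReal x y hx hy, betaIntegral_eq_integral_betaIntegrand,
    intervalIntegral.integral_congr (fun t ht => betaIntegrand_ofReal x y (by simpa using ht)),
    intervalIntegral.integral_ofReal, ofReal_re]

lemma norm_betaIntegral_le {u v : ℂ} (hu : 0 < u.re) (hv : 0 < v.re) :
    ‖betaIntegral u v‖ ≤ beta u.re v.re := by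
  have hg : IntervalIntegrable (fun t : ℝ => t ^ (u.re - 1) * (1 - t) ^ (v.re - 1)) volume 0 1 := by
    refine (intervalIntegrable_congr fun t ht => ?_).1
      (betaIntegral_convergent (u := u.re) (v := v.re) (by simpa) (by simpa)).norm
    have ht' : t ∈ Icc (0 : ℝ) 1 := Ioc_subset_Icc_self (by simpa using ht)
    rw [← betaIntegrand, betaIntegrand_ofReal _ _ ht', norm_real, Real.norm_of_nonneg
      (mul_nonneg (Real.rpow_nonneg ht'.1 _) (Real.rpow_nonneg (sub_nonneg.2 ht'.2) _))]
  rw [← integral_rpow_mul_one_sub_rpow hu hv]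
  exact intervalIntegral.norm_integral_le_of_norm_le zero_le_one
    (Filter.Eventually.of_forall fun t ht => norm_betaIntegrand_le u v (Ioc_subset_Icc_self ht)) hg

lemma Gamma_mul_Gamma_div_Gamma_add_two {a b : ℂ} (ha : 0 < a.re) (hb : 0 < b.re) :
    Gamma a * Gamma b / Gamma (a + b + 2) = betaIntegral (a + 2) b / (a * (a + 1)) := by
  have ha0 : a ≠ 0 := fun h => by simp [h] at ha
  have ha1 : a + 1 ≠ 0 := fun h => by
    have := congrArg re h
    simp only [add_re, one_re, zero_re] at this
    linarith
  have hΓ : Gamma (a + 2) = (a + 1) * a * Gamma a := by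
    rw [show a + 2 = a + 1 + 1 by ring, Gamma_add_one _ ha1, Gamma_add_one _ ha0, mul_assoc]
  rw [betaIntegral_eq_Gamma_mul_div _ _ (by simp; linarith) hb, hΓ,
    show a + 2 + b = a + b + 2 by ring]
  field_simp

lemma norm_mul_norm_add_one (a : ℂ) :
    ‖a‖ * ‖a + 1‖ = √((a.im ^ 2 + a.re ^ 2) * (a.im ^ 2 + (1 + a.re) ^ 2)) := by
  rw [norm_def, norm_def, ← Real.sqrt_mul (normSq_nonneg a), normSq_apply, normSq_apply]
  congr 1
  simp only [add_re, one_re, add_im, one_im]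
  ring

lemma norm_Gamma_mul_Gamma_div_Gamma_add_two_le {a b : ℂ} (ha : 0 < a.re) (hb : 0 < b.re) :
    ‖Gamma a * Gamma b / Gamma (a + b + 2)‖ ≤
      beta (a.re + 2) b.re * (√((a.im ^ 2 + a.re ^ 2) * (a.im ^ 2 + (1 + a.re) ^ 2)))⁻¹ := by
  rw [Gamma_mul_Gamma_div_Gamma_add_two ha hb, norm_div, norm_mul, norm_mul_norm_add_one,
    div_eq_mul_inv]
  have hB := norm_betaIntegral_le (u := a + 2) (by simp; linarith) hb
  rw [show (a + 2).re = a.re + 2 by simp] at hB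
  gcongr

end Complex

/-- With ε₂ = ε > 0 and ε₁ = -1-2ε,
`|P̂(v + iε)| ≤ B(ε, 2+ε) · min(Q(v₂²)^{-1/2}, Q((v₁+v₂)²)^{-1/2})`
where `Q(z) = (z+ε²)(z+(1+ε)²)` and `B(a,b) = Γ(a)Γ(b)/Γ(a+b)`. -/
theorem spread_payoff_transform_min_bound
    (ε : ℝ) (hε : 0 < ε) (v₁ v₂ : ℝ) :
    ‖(Complex.Gamma
            (Complex.I *
                (((v₁ : ℂ) + Complex.I * ((-1 - 2 * ε : ℝ) : ℂ)) +
                  ((v₂ : ℂ) + Complex.I * (ε : ℂ))) - 1) *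
          Complex.Gamma (-Complex.I * ((v₂ : ℂ) + Complex.I * (ε : ℂ))) /
          Complex.Gamma (Complex.I * ((v₁ : ℂ) + Complex.I * ((-1 - 2 * ε : ℝ) : ℂ)) + 1))‖ ≤
      Real.Gamma ε * Real.Gamma (2 + ε) / Real.Gamma (2 + 2 * ε) *
        min (Real.sqrt ((v₂ ^ 2 + ε ^ 2) * (v₂ ^ 2 + (1 + ε) ^ 2)))⁻¹
          (Real.sqrt (((v₁ + v₂) ^ 2 + ε ^ 2) * ((v₁ + v₂) ^ 2 + (1 + ε) ^ 2)))⁻¹ := by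
  set a : ℂ := ⟨ε, v₁ + v₂⟩
  set b : ℂ := ⟨ε, -v₂⟩
  have ha : Complex.I * (((v₁ : ℂ) + Complex.I * ((-1 - 2 * ε : ℝ) : ℂ)) +
      ((v₂ : ℂ) + Complex.I * (ε : ℂ))) - 1 = a := by
    apply Complex.ext <;> simp [a]; ring
  have hb : -Complex.I * ((v₂ : ℂ) + Complex.I * (ε : ℂ)) = b := by
    apply Complex.ext <;> simp [b]
  have hab : Complex.I * ((v₁ : ℂ) + Complex.I * ((-1 - 2 * ε : ℝ) : ℂ)) + 1 = a + b + 2 := by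
    apply Complex.ext <;> simp [a, b]; ring
  rw [ha, hb, hab]
  have hB : beta (ε + 2) ε = Real.Gamma ε * Real.Gamma (2 + ε) / Real.Gamma (2 + 2 * ε) := by
    rw [beta, add_comm ε 2, show 2 + ε + ε = 2 + 2 * ε by ring, mul_comm]
  rw [← hB, mul_min_of_nonneg _ _ (beta_pos (by linarith) hε).le]
  refine le_min ?_ ?_
  · simpa [a, b, mul_comm (Complex.Gamma a), add_comm b a] using
      Complex.norm_Gamma_mul_Gamma_div_Gamma_add_two_le (a := b) (b := a) hε hε
  · simpa [a, b] using Complex.norm_Gamma_mul_Gamma_div_Gamma_add_two_le (a := a) (b := b) hε hε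
end

section
/- Let M ≥ 1 be an integer, let ε₁, …, ε_M be real numbers with ε_m > 0 for all m, and let ε̃ be real with ε̃ + ε₁ + ⋯ + ε_M < -1. Let v ∈ ℝ^M and ṽ ∈ ℝ, and set u_m = v_m + iε_m for each m and ũ = ṽ + iε̃. Then ∫_{ℝ^{M+1}} (e^{x̃} - Σ_{m=1}^M e^{x_m} - 1)^+ · e^{-iũx̃} · e^{-i Σ_{m=1}^M u_m x_m} d^Mx dx̃ = Γ(i(ũ + Σ_{m=1}^M u_m) - 1) · ( ∏_{m=1}^M Γ(-iu_m) ) / Γ(iũ + 1). -/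
/-!
Integrate first in `x̃`: with `K = 1 + Σ e^{x_m}` and `a = -iũ`,
`∫ (e^{x̃} - K)⁺ e^{a x̃} dx̃ = K^{a+1} / (a (a + 1))`.
What remains is the Dirichlet-type integral
`∫_{ℝ^M} ∏ e^{c_m x_m} (A + Σ e^{x_m})^{-s} dx = A^{Σc - s} ∏ Γ(c_m) Γ(s - Σc) / Γ(s)`,
proved by induction on `M`: integrating out one coordinate `t` replaces `A` by `A + e^t`, and the
remaining one-variable integral is a beta integral after the substitution `u = e^t / (A + e^t)`.
Absolute integrability, needed for Fubini, follows from the same formulas evaluated at the real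
parts of the parameters. Finally `Γ(1 - a) = a (a + 1) Γ(-(a + 1))`.
-/

open MeasureTheory Set
open scoped Real Complex

lemma integral_norm_eq_norm_integral_of_ofReal_norm_eq {α : Type*} [MeasurableSpace α]
    {μ : Measure α} {f g : α → ℂ} (h : ∀ x, (‖f x‖ : ℂ) = g x) :
    ∫ x, ‖f x‖ ∂μ = ‖∫ x, g x ∂μ‖ := by
  simp_rw [← h, integral_complex_ofReal, Complex.norm_real, Real.norm_eq_abs]
  exact (abs_of_nonneg (integral_nonneg fun x => norm_nonneg (f x))).symm

lemma ofReal_cpow_eq_cexp {x : ℝ} (hx : 0 < x) (w : ℂ) :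
    (x : ℂ) ^ w = cexp (w * Real.log x) := by
  rw [Complex.cpow_def_of_ne_zero (by exact_mod_cast hx.ne'), ← Complex.ofReal_log hx.le,
    mul_comm]

noncomputable def callIntegrand (K : ℝ) (a : ℂ) (x : ℝ) : ℂ :=
  ((max (rexp x - K) 0 : ℝ) : ℂ) * cexp (a * x)

section Call

variable {K : ℝ} {a : ℂ}

lemma callIntegrand_eq_indicator (hK : 0 < K) (a : ℂ) :
    callIntegrand K a = (Ioi (Real.log K)).indicator
      fun x => cexp ((a + 1) * x) - K * cexp (a * x) := by
  ext x
  by_cases hx : x ∈ Ioi (Real.log K)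
  · have hKx : K < rexp x := by simpa [Real.exp_log hK] using Real.exp_lt_exp.2 (mem_Ioi.1 hx)
    rw [indicator_of_mem hx, callIntegrand, max_eq_left (sub_pos.2 hKx).le, add_one_mul,
      Complex.exp_add, Complex.ofReal_sub, Complex.ofReal_exp]
    ring
  · have hxK : rexp x ≤ K := by
      simpa [Real.exp_log hK] using Real.exp_le_exp.2 (not_lt.1 (mt mem_Ioi.2 hx))
    rw [indicator_of_notMem hx, callIntegrand, max_eq_right (sub_nonpos.2 hxK)]
    simp

lemma integrable_callIntegrand (hK : 0 < K) (ha : a.re < -1) :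
    Integrable (callIntegrand K a) := by
  rw [callIntegrand_eq_indicator hK, integrable_indicator_iff measurableSet_Ioi]
  exact (integrableOn_exp_mul_complex_Ioi (by simp; linarith) _).sub
    ((integrableOn_exp_mul_complex_Ioi (by linarith) _).const_mul _)

lemma integral_callIntegrand (hK : 0 < K) (ha : a.re < -1) :
    ∫ x, callIntegrand K a x = (K : ℂ) ^ (a + 1) / (a * (a + 1)) := by
  have ha₀ : a ≠ 0 := fun h => by simp [h] at ha; linarith
  have ha₁ : a + 1 ≠ 0 := fun h => by
    have := congrArg Complex.re h; simp at this; linarith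
  rw [callIntegrand_eq_indicator hK, integral_indicator measurableSet_Ioi,
    integral_sub (integrableOn_exp_mul_complex_Ioi (by simp; linarith) _)
      ((integrableOn_exp_mul_complex_Ioi (by linarith) _).const_mul _),
    integral_const_mul, integral_exp_mul_complex_Ioi (by simp; linarith),
    integral_exp_mul_complex_Ioi (by linarith), ← ofReal_cpow_eq_cexp hK,
    ← ofReal_cpow_eq_cexp hK, Complex.cpow_add _ _ (by exact_mod_cast hK.ne'), Complex.cpow_one]
  field_simp
  ring

lemma ofReal_norm_callIntegrand (K : ℝ) (a : ℂ) (x : ℝ) :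
    (‖callIntegrand K a x‖ : ℂ) = callIntegrand K a.re x := by
  rw [callIntegrand, callIntegrand, norm_mul, Complex.norm_real, Complex.norm_exp,
    Real.norm_of_nonneg (le_max_right _ _)]
  push_cast [Complex.ofReal_exp]
  simp

lemma integral_norm_callIntegrand (hK : 0 < K) (ha : a.re < -1) :
    ∫ x, ‖callIntegrand K a x‖ = ‖(K : ℂ) ^ (a + 1)‖ / (a.re * (a.re + 1)) := by
  have hden : ‖(a.re : ℂ) * (a.re + 1)‖ = a.re * (a.re + 1) := by
    rw [← Complex.ofReal_one, ← Complex.ofReal_add, ← Complex.ofReal_mul, Complex.norm_real,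
      Real.norm_of_nonneg (by nlinarith)]
  rw [integral_norm_eq_norm_integral_of_ofReal_norm_eq (ofReal_norm_callIntegrand K a),
    integral_callIntegrand hK (by simpa using ha), norm_div, hden,
    Complex.norm_cpow_eq_rpow_re_of_pos hK, Complex.norm_cpow_eq_rpow_re_of_pos hK]
  simp

end Call

section Beta

variable {A : ℝ}

lemma hasDerivAt_exp_div_const_add_exp (hA : 0 < A) (t : ℝ) :
    HasDerivAt (fun t => rexp t / (A + rexp t)) (A * rexp t / (A + rexp t) ^ 2) t := by
  refine ((Real.hasDerivAt_exp t).div ((Real.hasDerivAt_exp t).const_add A)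
    (by positivity)).congr_deriv ?_
  ring

lemma strictMono_exp_div_const_add_exp (hA : 0 < A) :
    StrictMono fun t => rexp t / (A + rexp t) := by
  intro t u htu
  have := Real.exp_lt_exp.2 htu
  rw [div_lt_div_iff₀ (by positivity) (by positivity)]
  nlinarith

lemma image_exp_div_const_add_exp (hA : 0 < A) :
    (fun t => rexp t / (A + rexp t)) '' univ = Ioo 0 1 := by
  ext y
  simp only [image_univ, mem_range, mem_Ioo]
  constructor
  · rintro ⟨t, rfl⟩
    exact ⟨by positivity, (div_lt_one (by positivity)).2 (by linarith)⟩
  · rintro ⟨hy₀, hy₁⟩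
    refine ⟨Real.log (A * y / (1 - y)), ?_⟩
    have h₁ : 0 < 1 - y := by linarith
    rw [Real.exp_log (by positivity)]
    field_simp
    ring

lemma abs_deriv_smul_betaIntegrand_exp_div_const_add_exp (hA : 0 < A) (c s : ℂ) (t : ℝ) :
    |A * rexp t / (A + rexp t) ^ 2| •
        (((rexp t / (A + rexp t) : ℝ) : ℂ) ^ (c - 1) *
          (1 - ((rexp t / (A + rexp t) : ℝ) : ℂ)) ^ (s - c - 1))
      = (A : ℂ) ^ (s - c) * (cexp (c * t) * ((A + rexp t : ℝ) : ℂ) ^ (-s)) := by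
  have hD : 0 < A + rexp t := by positivity
  have h₁ : 1 - ((rexp t / (A + rexp t) : ℝ) : ℂ) = ((A / (A + rexp t) : ℝ) : ℂ) := by
    rw [← Complex.ofReal_one, ← Complex.ofReal_sub]
    congr 1
    field_simp
    ring
  rw [h₁, abs_of_pos (by positivity), Complex.real_smul,
    ← Real.exp_log (by positivity : 0 < A * rexp t / (A + rexp t) ^ 2), Complex.ofReal_exp,
    ofReal_cpow_eq_cexp (by positivity), ofReal_cpow_eq_cexp (by positivity),
    ofReal_cpow_eq_cexp hA, ofReal_cpow_eq_cexp hD, ← Complex.exp_add, ← Complex.exp_add,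
    ← Complex.exp_add, ← Complex.exp_add]
  congr 1
  rw [Real.log_div (by positivity) hD.ne', Real.log_div hA.ne' hD.ne',
    Real.log_div (by positivity) (by positivity), Real.log_mul hA.ne' (by positivity),
    Real.log_exp, Real.log_pow]
  push_cast
  ring

lemma integrableOn_Ioo_betaIntegrand {c s : ℂ} (hc : 0 < c.re) (hcs : c.re < s.re) :
    IntegrableOn (fun x : ℝ => (x : ℂ) ^ (c - 1) * (1 - (x : ℂ)) ^ (s - c - 1)) (Ioo 0 1) :=
  (intervalIntegrable_iff_integrableOn_Ioo_of_le zero_le_one).1 <|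
    Complex.betaIntegral_convergent hc (by simpa using hcs)

lemma integrable_cexp_mul_cpow_const_add_exp {c s : ℂ} (hc : 0 < c.re) (hcs : c.re < s.re)
    (hA : 0 < A) : Integrable fun t : ℝ => cexp (c * t) * ((A + rexp t : ℝ) : ℂ) ^ (-s) := by
  have h := integrableOn_Ioo_betaIntegrand hc hcs
  rw [← image_exp_div_const_add_exp hA, integrableOn_image_iff_integrableOn_abs_deriv_smul
    MeasurableSet.univ (fun t _ => (hasDerivAt_exp_div_const_add_exp hA t).hasDerivWithinAt)
    (strictMono_exp_div_const_add_exp hA).injective.injOn, integrableOn_univ] at h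
  simp_rw [abs_deriv_smul_betaIntegrand_exp_div_const_add_exp hA] at h
  exact (integrable_const_mul_iff (Ne.isUnit (by simp [hA.ne'])) _).1 h

lemma integral_cexp_mul_cpow_const_add_exp {c s : ℂ} (hc : 0 < c.re) (hcs : c.re < s.re)
    (hA : 0 < A) :
    ∫ t : ℝ, cexp (c * t) * ((A + rexp t : ℝ) : ℂ) ^ (-s)
      = (A : ℂ) ^ (c - s) * (Complex.Gamma c * Complex.Gamma (s - c) / Complex.Gamma s) := by
  have h := integral_image_eq_integral_abs_deriv_smul MeasurableSet.univ
    (fun t _ => (hasDerivAt_exp_div_const_add_exp hA t).hasDerivWithinAt)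
    (strictMono_exp_div_const_add_exp hA).injective.injOn
    (fun x : ℝ => (x : ℂ) ^ (c - 1) * (1 - (x : ℂ)) ^ (s - c - 1))
  simp_rw [image_exp_div_const_add_exp hA, Measure.restrict_univ,
    abs_deriv_smul_betaIntegrand_exp_div_const_add_exp hA, integral_const_mul,
    ← integral_Ioc_eq_integral_Ioo, ← intervalIntegral.integral_of_le zero_le_one] at h
  rw [← Complex.betaIntegral, Complex.betaIntegral_eq_Gamma_mul_div _ _ hc (by simpa using hcs),
    add_sub_cancel] at h
  rw [h, ← neg_sub, Complex.cpow_neg, inv_mul_cancel_left₀ (by simp [hA.ne'])]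

end Beta

noncomputable def dirichletIntegrand {M : ℕ} (A : ℝ) (c : Fin M → ℂ) (s : ℂ)
    (y : Fin M → ℝ) : ℂ :=
  (∏ m, cexp (c m * y m)) * ((A + ∑ m, rexp (y m) : ℝ) : ℂ) ^ (-s)

section Dirichlet

variable {M : ℕ}

lemma dirichletIntegrand_succ (A : ℝ) (c : Fin (M + 1) → ℂ) (s : ℂ)
    (y : Fin (M + 1) → ℝ) :
    dirichletIntegrand A c s y
      = cexp (c 0 * y 0) * dirichletIntegrand (A + rexp (y 0)) (Fin.tail c) s (Fin.tail y) := by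
  simp only [dirichletIntegrand, Fin.prod_univ_succ, Fin.sum_univ_succ, Fin.tail, add_assoc]
  ring

lemma ofReal_norm_dirichletIntegrand {A : ℝ} (hA : 0 < A) (c : Fin M → ℂ) (s : ℂ)
    (y : Fin M → ℝ) :
    (‖dirichletIntegrand A c s y‖ : ℂ)
      = dirichletIntegrand A (fun m => ((c m).re : ℂ)) (s.re : ℂ) y := by
  have hpos : 0 < A + ∑ m, rexp (y m) := by positivity
  rw [dirichletIntegrand, dirichletIntegrand, norm_mul, norm_prod,
    Complex.norm_cpow_eq_rpow_re_of_pos hpos, ← Complex.ofReal_neg,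
    ← Complex.ofReal_cpow hpos.le, Complex.ofReal_mul, Complex.ofReal_prod]
  congr 1
  refine Finset.prod_congr rfl fun m _ => ?_
  rw [Complex.norm_exp, Complex.ofReal_exp, Complex.re_mul_ofReal, Complex.ofReal_mul]

lemma measurable_cexp_mul_dirichletIntegrand (A : ℝ) (c : Fin (M + 1) → ℂ) (s : ℂ) :
    Measurable fun p : ℝ × (Fin M → ℝ) =>
      cexp (c 0 * p.1) * dirichletIntegrand (A + rexp p.1) (Fin.tail c) s p.2 := by
  unfold dirichletIntegrand
  fun_prop


lemma integrable_dirichletIntegrand_succ_iff (A : ℝ) (c : Fin (M + 1) → ℂ) (s : ℂ) :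
    Integrable (dirichletIntegrand A c s) ↔ Integrable fun p : ℝ × (Fin M → ℝ) =>
      cexp (c 0 * p.1) * dirichletIntegrand (A + rexp p.1) (Fin.tail c) s p.2 := by
  have hmp := volume_preserving_piFinSuccAbove (fun _ : Fin (M + 1) => ℝ) 0
  rw [← hmp.integrable_comp_emb (MeasurableEquiv.measurableEmbedding _)]
  exact integrable_congr (ae_of_all _ fun y => dirichletIntegrand_succ A c s y)

lemma integral_dirichletIntegrand_succ (A : ℝ) (c : Fin (M + 1) → ℂ) (s : ℂ) :
    ∫ y, dirichletIntegrand A c s y = ∫ p : ℝ × (Fin M → ℝ),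
      cexp (c 0 * p.1) * dirichletIntegrand (A + rexp p.1) (Fin.tail c) s p.2 := by
  rw [← (volume_preserving_piFinSuccAbove (fun _ : Fin (M + 1) => ℝ) 0).integral_comp']
  exact integral_congr_ae (ae_of_all _ fun y => dirichletIntegrand_succ A c s y)

lemma integral_norm_dirichletIntegrand {A : ℝ} (hA : 0 < A) {c : Fin M → ℂ} {s K : ℂ}
    (h : ∫ y, dirichletIntegrand A (fun m => ((c m).re : ℂ)) (s.re : ℂ) y
      = (A : ℂ) ^ (∑ m, ((c m).re : ℂ) - s.re) * K) :
    ∫ y, ‖dirichletIntegrand A c s y‖ = ‖(A : ℂ) ^ (∑ m, c m - s)‖ * ‖K‖ := by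
  rw [integral_norm_eq_norm_integral_of_ofReal_norm_eq (ofReal_norm_dirichletIntegrand hA c s),
    h, norm_mul, Complex.norm_cpow_eq_rpow_re_of_pos hA, Complex.norm_cpow_eq_rpow_re_of_pos hA]
  simp [Complex.re_sum]

theorem integrable_dirichletIntegrand_and_integral_eq :
    ∀ {M : ℕ} {A : ℝ} {c : Fin M → ℂ} {s : ℂ},
      0 < A → (∀ m, 0 < (c m).re) → ∑ m, (c m).re < s.re →
      Integrable (dirichletIntegrand A c s) ∧
        ∫ y, dirichletIntegrand A c s y = (A : ℂ) ^ (∑ m, c m - s) *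
          ((∏ m, Complex.Gamma (c m)) * Complex.Gamma (s - ∑ m, c m) / Complex.Gamma s)
  | 0, A, c, s, hA, _, hs => by
    have hΓ : Complex.Gamma s ≠ 0 := Complex.Gamma_ne_zero_of_re_pos (by simpa using hs)
    simp [dirichletIntegrand, measureReal_def, volume_pi, hΓ]
  | M + 1, A, c, s, hA, hc, hs => by
    have hc' : ∀ m, 0 < (Fin.tail c m).re := fun m => hc m.succ
    have hs' : (c 0).re < (s - ∑ m, Fin.tail c m).re := by
      rw [Fin.sum_univ_succ] at hs
      simpa [Complex.re_sum, Fin.tail, lt_sub_iff_add_lt] using hs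
    have hslice (t : ℝ) := integrable_dirichletIntegrand_and_integral_eq (A := A + rexp t)
      (s := s) (by positivity) hc' (by simp at hs'; linarith [hc 0])
    have hslice_re (t : ℝ) := integrable_dirichletIntegrand_and_integral_eq (A := A + rexp t)
      (c := fun m => ((Fin.tail c m).re : ℂ)) (s := (s.re : ℂ)) (by positivity)
      (by simpa using hc') (by simp at hs' ⊢; linarith [hc 0])
    have hint : Integrable fun p : ℝ × (Fin M → ℝ) =>
        cexp (c 0 * p.1) * dirichletIntegrand (A + rexp p.1) (Fin.tail c) s p.2 := by
      refine (integrable_prod_iff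
        (measurable_cexp_mul_dirichletIntegrand A c s).aestronglyMeasurable).2
        ⟨ae_of_all _ fun t => (hslice t).1.const_mul (cexp (c 0 * t)), ?_⟩
      simp_rw [norm_mul (cexp _), integral_const_mul,
        integral_norm_dirichletIntegrand (by positivity) (hslice_re _).2, ← mul_assoc,
        ← norm_mul (cexp _), ← neg_sub s]
      exact (integrable_cexp_mul_cpow_const_add_exp (hc 0) hs' hA).norm.mul_const _
    refine ⟨(integrable_dirichletIntegrand_succ_iff A c s).2 hint, ?_⟩
    rw [integral_dirichletIntegrand_succ, Measure.volume_eq_prod, integral_prod _ hint]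
    simp_rw [integral_const_mul, (hslice _).2, ← mul_assoc, integral_mul_const]
    rw [← neg_sub s, integral_cexp_mul_cpow_const_add_exp (hc 0) hs' hA, Fin.sum_univ_succ,
      Fin.prod_univ_succ]
    have hΓ : Complex.Gamma (s - ∑ m, Fin.tail c m) ≠ 0 :=
      Complex.Gamma_ne_zero_of_re_pos (by linarith [hc 0])
    rw [show c 0 - (s - ∑ m, Fin.tail c m) = c 0 + ∑ m, Fin.tail c m - s by ring,
      show s - ∑ m, Fin.tail c m - c 0 = s - (c 0 + ∑ m, Fin.tail c m) by ring]
    field_simp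
    simp only [Fin.tail]
    ring

end Dirichlet

lemma Gamma_one_sub_eq_mul_Gamma_neg_add_one (a : ℂ) (ha₀ : a ≠ 0) (ha₁ : a + 1 ≠ 0) :
    Complex.Gamma (1 - a) = a * (a + 1) * Complex.Gamma (-(a + 1)) := by
  calc Complex.Gamma (1 - a) = -a * Complex.Gamma (-a) := by
        rw [← Complex.Gamma_add_one _ (neg_ne_zero.2 ha₀), neg_add_eq_sub]
    _ = -a * (-(a + 1) * Complex.Gamma (-(a + 1))) := by
        rw [← Complex.Gamma_add_one _ (neg_ne_zero.2 ha₁), neg_add, neg_add_cancel_right]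
    _ = a * (a + 1) * Complex.Gamma (-(a + 1)) := by ring

lemma integral_callIntegrand_mul_prod_cexp {M : ℕ} {a : ℂ} {c : Fin M → ℂ}
    (hc : ∀ m, 0 < (c m).re) (ha : a.re + ∑ m, (c m).re < -1) :
    ∫ x : (Fin M → ℝ) × ℝ,
        callIntegrand (1 + ∑ m, rexp (x.1 m)) a x.2 * ∏ m, cexp (c m * x.1 m)
      = Complex.Gamma (-1 - a - ∑ m, c m) * (∏ m, Complex.Gamma (c m)) /
          Complex.Gamma (1 - a) := by
  have hc_sum : 0 ≤ ∑ m, (c m).re := Finset.sum_nonneg fun m _ => (hc m).le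
  have ha' : a.re < -1 := by linarith
  have ha₀ : a ≠ 0 := fun h => by simp [h] at ha'; linarith
  have ha₁ : a + 1 ≠ 0 := fun h => by
    have := congrArg Complex.re h
    simp at this
    linarith
  have hK (y : Fin M → ℝ) : 0 < 1 + ∑ m, rexp (y m) := by positivity
  have hD := integrable_dirichletIntegrand_and_integral_eq (A := 1) (s := -(a + 1)) one_pos hc
    (by simp; linarith)
  have hslice (y : Fin M → ℝ) : ∫ t, callIntegrand (1 + ∑ m, rexp (y m)) a t *
      ∏ m, cexp (c m * y m) = dirichletIntegrand 1 c (-(a + 1)) y / (a * (a + 1)) := by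
    rw [integral_mul_const, integral_callIntegrand (hK y) ha', dirichletIntegrand, neg_neg]
    ring
  have hint : Integrable (fun x : (Fin M → ℝ) × ℝ =>
      callIntegrand (1 + ∑ m, rexp (x.1 m)) a x.2 * ∏ m, cexp (c m * x.1 m)) := by
    have hmeas : Measurable fun x : (Fin M → ℝ) × ℝ =>
        callIntegrand (1 + ∑ m, rexp (x.1 m)) a x.2 * ∏ m, cexp (c m * x.1 m) := by
      unfold callIntegrand
      fun_prop
    refine (integrable_prod_iff hmeas.aestronglyMeasurable).2
      ⟨ae_of_all _ fun y => (integrable_callIntegrand (hK y) ha').mul_const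
        (∏ m, cexp (c m * y m)), ?_⟩
    simp_rw [norm_mul, integral_mul_const, integral_norm_callIntegrand (hK _) ha']
    refine (hD.1.norm.div_const (a.re * (a.re + 1))).congr (ae_of_all _ fun y => ?_)
    simp only [dirichletIntegrand, norm_mul, neg_neg]
    ring
  rw [Measure.volume_eq_prod, integral_prod _ hint]
  simp_rw [hslice]
  rw [integral_div, hD.2, Complex.ofReal_one, Complex.one_cpow, one_mul,
    Gamma_one_sub_eq_mul_Gamma_neg_add_one a ha₀ ha₁,
    show -1 - a - ∑ m, c m = -(a + 1) - ∑ m, c m by ring]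
  field_simp

theorem multiasset_spread_payoff_fourier_transform_general
    (M : ℕ) (ε : Fin M → ℝ) (hε : ∀ m, 0 < ε m)
    (εt : ℝ) (hsum : εt + ∑ m, ε m < -1) (v : Fin M → ℝ) (vt : ℝ) :
    (∫ x : (Fin M → ℝ) × ℝ,
        ((max (Real.exp x.2 - ∑ m, Real.exp (x.1 m) - 1) 0 : ℝ) : ℂ) *
          Complex.exp (-Complex.I * ((vt : ℂ) + Complex.I * (εt : ℂ)) * (x.2 : ℂ)) *
          Complex.exp
            (-Complex.I *
              ∑ m, ((v m : ℂ) + Complex.I * (ε m : ℂ)) * ((x.1 m : ℝ) : ℂ))) =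
      Complex.Gamma
          (Complex.I *
              (((vt : ℂ) + Complex.I * (εt : ℂ)) +
                ∑ m, ((v m : ℂ) + Complex.I * (ε m : ℂ))) - 1) *
        (∏ m, Complex.Gamma (-Complex.I * ((v m : ℂ) + Complex.I * (ε m : ℂ)))) /
        Complex.Gamma (Complex.I * ((vt : ℂ) + Complex.I * (εt : ℂ)) + 1) := by
  have h := integral_callIntegrand_mul_prod_cexp (a := -Complex.I * (vt + Complex.I * εt))
    (c := fun m => -Complex.I * (v m + Complex.I * ε m)) (by simpa using hε) (by simpa using hsum)
  convert h using 1
  · simp_rw [callIntegrand, sub_sub, add_comm _ (1 : ℝ), Finset.mul_sum, Complex.exp_sum,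
      mul_assoc]
  · rw [← Finset.mul_sum]
    ring_nf

/-- The Fourier transform of the `M`-asset spread option payoff
`(e^{x̃} - Σ_m e^{x_m} - 1)⁺` along the shifted contour `u_m = v_m + iε_m`,
`ũ = ṽ + iε̃` (with `ε_m > 0` and `ε̃ + Σ_m ε_m < -1`) equals
`Γ(i(ũ + Σ u_m) - 1)(∏_m Γ(-iu_m))/Γ(iũ + 1)`. -/
theorem multiasset_spread_payoff_fourier_transform
    (M : ℕ) (hM : 1 ≤ M) (ε : Fin M → ℝ) (hε : ∀ m, 0 < ε m)
    (εt : ℝ) (hsum : εt + ∑ m, ε m < -1) (v : Fin M → ℝ) (vt : ℝ) :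
    (∫ x : (Fin M → ℝ) × ℝ,
        ((max (Real.exp x.2 - ∑ m, Real.exp (x.1 m) - 1) 0 : ℝ) : ℂ) *
          Complex.exp (-Complex.I * ((vt : ℂ) + Complex.I * (εt : ℂ)) * (x.2 : ℂ)) *
          Complex.exp
            (-Complex.I *
              ∑ m, ((v m : ℂ) + Complex.I * (ε m : ℂ)) * ((x.1 m : ℝ) : ℂ))) =
      Complex.Gamma
          (Complex.I *
              (((vt : ℂ) + Complex.I * (εt : ℂ)) +
                ∑ m, ((v m : ℂ) + Complex.I * (ε m : ℂ))) - 1) *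
        (∏ m, Complex.Gamma (-Complex.I * ((v m : ℂ) + Complex.I * (ε m : ℂ)))) /
        Complex.Gamma (Complex.I * ((vt : ℂ) + Complex.I * (εt : ℂ)) + 1) :=
  multiasset_spread_payoff_fourier_transform_general M ε hε εt hsum v vt
end
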